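/- arXiv:2410.09689 — 4 statements merged into one kernel-verified Lean document; each statement's English description precedes it below -/
import Mathlib

section
/- Let V, M be finite-dimensional real inner product spaces, T : V → K a linear map into an inner product space K, and d : M → V a linear map with T ∘ d = 0. Suppose: (a) ‖v‖² ≤ C(‖Tv‖² + sup_{μ≠0} ⟨v, dμ⟩²/‖μ‖²_{M,1}) for all v ∈ V, where ‖μ‖_{M,1}² = ‖μ‖² + ‖dμ‖²; and (b) ‖λ‖_{M,1} ≤ C(‖λ‖ + sup_{v≠0} ⟨v, dλ⟩/‖v‖_V). Then for every f ∈ V and g ∈ M the augmented system: find (u, λ) ∈ V × M with ⟨Tu, Tv⟩ + ⟨v, dλ⟩ = ⟨f, v⟩ for all v, and ⟨u, dμ⟩ − ⟨λ, μ⟩_M = ⟨g, μ⟩ for all μ, has a unique solution. -/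
open RealInnerProductSpace

/-- Well-posedness of the augmented mixed formulation (finite-dimensional Zulehner
theory): under the two norm equivalences (a) and (b), the augmented system has a
unique solution for every data `(f, g)`. -/
theorem stmt11 {V M K : Type*}
    [NormedAddCommGroup V] [InnerProductSpace ℝ V] [FiniteDimensional ℝ V]
    [NormedAddCommGroup M] [InnerProductSpace ℝ M] [FiniteDimensional ℝ M]
    [NormedAddCommGroup K] [InnerProductSpace ℝ K] [FiniteDimensional ℝ K]
    (T : V →ₗ[ℝ] K) (dOp : M →ₗ[ℝ] V) (hTd : ∀ μ, T (dOp μ) = 0)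
    (C : ℝ) (hC : 0 < C)
    (ha : ∀ v : V, ‖v‖ ^ 2 ≤ C * (‖T v‖ ^ 2 +
      sSup {r : ℝ | ∃ μ : M, μ ≠ 0 ∧
        r = ⟪v, dOp μ⟫ ^ 2 / (‖μ‖ ^ 2 + ‖dOp μ‖ ^ 2)}))
    (hb : ∀ lam : M, Real.sqrt (‖lam‖ ^ 2 + ‖dOp lam‖ ^ 2) ≤
      C * (‖lam‖ + sSup {r : ℝ | ∃ v : V, v ≠ 0 ∧ r = ⟪v, dOp lam⟫ / ‖v‖})) :
    ∀ (f : V) (g : M), ∃! p : V × M,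
      (∀ v : V, ⟪T p.1, T v⟫ + ⟪v, dOp p.2⟫ = ⟪f, v⟫) ∧
      (∀ μ : M, ⟪p.1, dOp μ⟫ - ⟪p.2, μ⟫ = ⟪g, μ⟫) := by
  intro f g
  classical
  set L : (V × M) →ₗ[ℝ] (V × M) :=
    LinearMap.prod
      ((LinearMap.adjoint T).comp (T.comp (LinearMap.fst ℝ V M)) +
        dOp.comp (LinearMap.snd ℝ V M))
      ((LinearMap.adjoint dOp).comp (LinearMap.fst ℝ V M) - LinearMap.snd ℝ V M)
    with hLdef
  have hLapp : ∀ p : V × M,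
      L p = ((LinearMap.adjoint T) (T p.1) + dOp p.2,
             (LinearMap.adjoint dOp) p.1 - p.2) := by
    intro p; rfl
  have hinj : Function.Injective L := by
    rw [← LinearMap.ker_eq_bot, LinearMap.ker_eq_bot']
    rintro ⟨u, lam⟩ hp
    rw [hLapp] at hp
    have h1 : (LinearMap.adjoint T) (T u) + dOp lam = 0 := congrArg Prod.fst hp
    have h2 : (LinearMap.adjoint dOp) u - lam = 0 := congrArg Prod.snd hp
    have e2 : ⟪u, dOp lam⟫ = ‖lam‖ ^ 2 := by
      have := congrArg (fun x => ⟪x, lam⟫) h2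
      simp only [inner_sub_left, LinearMap.adjoint_inner_left, inner_zero_left] at this
      have h3 : ⟪u, dOp lam⟫ - ⟪lam, lam⟫ = 0 := this
      rw [real_inner_self_eq_norm_sq] at h3
      linarith
    have e1 : ‖T u‖ ^ 2 + ‖lam‖ ^ 2 = 0 := by
      have := congrArg (fun x => ⟪x, u⟫) h1
      simp only [inner_add_left, LinearMap.adjoint_inner_left, inner_zero_left] at this
      have h4 : ⟪T u, T u⟫ + ⟪dOp lam, u⟫ = 0 := this
      rw [real_inner_self_eq_norm_sq, real_inner_comm, e2] at h4
      exact h4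
    have hTu : T u = 0 := by
      have : ‖T u‖ ^ 2 = 0 := by nlinarith [sq_nonneg ‖T u‖, sq_nonneg ‖lam‖]
      simpa [pow_eq_zero_iff] using this
    have hlam : lam = 0 := by
      have : ‖lam‖ ^ 2 = 0 := by nlinarith [sq_nonneg ‖T u‖, sq_nonneg ‖lam‖]
      simpa [pow_eq_zero_iff] using this
    have hdu : ∀ μ : M, ⟪u, dOp μ⟫ = 0 := by
      intro μ
      have hadj : (LinearMap.adjoint dOp) u = 0 := by
        rw [sub_eq_zero] at h2; rw [h2, hlam]
      rw [← LinearMap.adjoint_inner_left, hadj, inner_zero_left]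
    have hsup : sSup {r : ℝ | ∃ μ : M, μ ≠ 0 ∧
        r = ⟪u, dOp μ⟫ ^ 2 / (‖μ‖ ^ 2 + ‖dOp μ‖ ^ 2)} ≤ 0 := by
      apply Real.sSup_nonpos
      rintro r ⟨μ, hμ, rfl⟩
      rw [hdu μ]
      simp
    have hu : u = 0 := by
      have hau := ha u
      rw [hTu] at hau
      simp only [norm_zero] at hau
      have : ‖u‖ ^ 2 ≤ 0 := by nlinarith
      have hn : ‖u‖ ^ 2 = 0 := le_antisymm this (sq_nonneg _)
      simpa [pow_eq_zero_iff] using hn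
    simp [hu, hlam, Prod.ext_iff]
  have hsurj : Function.Surjective L :=
    (LinearMap.injective_iff_surjective).mp hinj
  obtain ⟨p, hp⟩ := hsurj (f, g)
  have key : ∀ q : V × M,
      ((∀ v : V, ⟪T q.1, T v⟫ + ⟪v, dOp q.2⟫ = ⟪f, v⟫) ∧
       (∀ μ : M, ⟪q.1, dOp μ⟫ - ⟪q.2, μ⟫ = ⟪g, μ⟫)) ↔ L q = (f, g) := by
    rintro ⟨u, lam⟩
    rw [hLapp, Prod.ext_iff]
    dsimp only
    constructor
    · rintro ⟨h1, h2⟩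
      constructor
      · apply ext_inner_left ℝ
        intro v
        rw [inner_add_right, LinearMap.adjoint_inner_right]
        linarith [h1 v, real_inner_comm (T u) (T v), real_inner_comm f v]
      · apply ext_inner_left ℝ
        intro μ
        rw [inner_sub_right, LinearMap.adjoint_inner_right]
        linarith [h2 μ, real_inner_comm u (dOp μ), real_inner_comm lam μ,
          real_inner_comm g μ]
    · rintro ⟨h1, h2⟩
      constructor
      · intro v
        have h3 := congrArg (fun x => ⟪v, x⟫) h1
        simp only [inner_add_right, LinearMap.adjoint_inner_right] at h3
        linarith [h3, real_inner_comm (T u) (T v), real_inner_comm f v]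
      · intro μ
        have h3 := congrArg (fun x => ⟪μ, x⟫) h2
        simp only [inner_sub_right, LinearMap.adjoint_inner_right] at h3
        linarith [h3, real_inner_comm u (dOp μ), real_inner_comm lam μ,
          real_inner_comm g μ]
  refine ⟨p, (key p).mpr hp, ?_⟩
  intro q hq
  exact hinj (((key q).mp hq).trans hp.symm)
end

section
/- Let V, Q be finite-dimensional real inner product spaces, a : V × V → ℝ a symmetric bilinear form, and b : V × Q → ℝ a bilinear form. Assume: (coercivity on the kernel) a(v, v) ≥ α‖v‖² for all v ∈ Z := {v : b(v, q) = 0 ∀q ∈ Q} with α > 0; and (inf-sup) for every q ∈ Q, sup_{v≠0} b(v, q)/‖v‖ ≥ β‖q‖ with β > 0. Assume also a is positive semidefinite on all of V. Then for every pair of functionals (F, G) the saddle-point system a(u, v) + b(v, p) = F(v) ∀v, b(u, q) = G(q) ∀q has a unique solution (u, p) ∈ V × Q. -/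
set_option maxHeartbeats 1000000


open RealInnerProductSpace

/-- Finite-dimensional Babuška–Brezzi theorem: a symmetric positive-semidefinite
form `a`, coercive on the kernel of `b`, together with the inf-sup condition for
`b`, yields unique solvability of the saddle-point system for all data. -/
theorem stmt14 {V Q : Type*}
    [NormedAddCommGroup V] [InnerProductSpace ℝ V] [FiniteDimensional ℝ V]
    [NormedAddCommGroup Q] [InnerProductSpace ℝ Q] [FiniteDimensional ℝ Q]
    (a : V →ₗ[ℝ] V →ₗ[ℝ] ℝ) (b : V →ₗ[ℝ] Q →ₗ[ℝ] ℝ)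
    (hsymm : ∀ u v, a u v = a v u)
    (hpsd : ∀ v, 0 ≤ a v v)
    (α : ℝ) (hα : 0 < α)
    (hcoer : ∀ v : V, (∀ q : Q, b v q = 0) → α * ‖v‖ ^ 2 ≤ a v v)
    (β : ℝ) (hβ : 0 < β)
    (hinfsup : ∀ q : Q, β * ‖q‖ ≤ sSup {r : ℝ | ∃ v : V, v ≠ 0 ∧ r = b v q / ‖v‖}) :
    ∀ (F : V →ₗ[ℝ] ℝ) (G : Q →ₗ[ℝ] ℝ), ∃! up : V × Q,
      (∀ v : V, a up.1 v + b v up.2 = F v) ∧ (∀ q : Q, b up.1 q = G q) := by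
  -- the linear operator defining the saddle-point system
  set L : (V × Q) →ₗ[ℝ] (Module.Dual ℝ V × Module.Dual ℝ Q) :=
    (a.comp (LinearMap.fst ℝ V Q) + (b.flip).comp (LinearMap.snd ℝ V Q)).prod
      (b.comp (LinearMap.fst ℝ V Q)) with hL
  have hLapp : ∀ u : V, ∀ p : Q, L (u, p) =
      (a u + b.flip p, b u) := by intro u p; rfl
  -- injectivity of L
  have hinj : Function.Injective L := by
    rw [← LinearMap.ker_eq_bot, LinearMap.ker_eq_bot']
    rintro ⟨u, p⟩ h
    rw [hLapp, Prod.mk_eq_zero] at h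
    obtain ⟨h1, h2⟩ := h
    have h1' : ∀ v : V, a u v + b v p = 0 := fun v => by
      have := LinearMap.congr_fun h1 v; simpa using this
    have h2' : ∀ q : Q, b u q = 0 := fun q => by
      have := LinearMap.congr_fun h2 q; simpa using this
    -- u = 0
    have hauu : a u u = 0 := by
      have := h1' u
      rw [h2' p, add_zero] at this
      exact this
    have hu : u = 0 := by
      have hc := hcoer u h2'
      rw [hauu] at hc
      have h0 : α * ‖u‖ ^ 2 = 0 := le_antisymm hc (mul_nonneg hα.le (sq_nonneg _))
      have hsq : ‖u‖ ^ 2 = 0 := by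
        rcases mul_eq_zero.mp h0 with h | h
        · exact absurd h hα.ne'
        · exact h
      exact norm_eq_zero.mp (pow_eq_zero_iff two_ne_zero |>.mp hsq)
    -- p = 0
    have hbp : ∀ v : V, b v p = 0 := by
      intro v
      have := h1' v
      rw [hu] at this
      simpa using this
    have hsup : sSup {r : ℝ | ∃ v : V, v ≠ 0 ∧ r = b v p / ‖v‖} ≤ 0 := by
      apply Real.sSup_le _ le_rfl
      rintro x ⟨v, _, rfl⟩
      rw [hbp v, zero_div]
    have hp : p = 0 := by
      have := (hinfsup p).trans hsup
      have : ‖p‖ ≤ 0 := by nlinarith [norm_nonneg p]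
      exact norm_eq_zero.mp (le_antisymm this (norm_nonneg p))
    rw [hu, hp]; rfl
  -- dimension count gives bijectivity
  have hdim : Module.finrank ℝ (V × Q)
      = Module.finrank ℝ (Module.Dual ℝ V × Module.Dual ℝ Q) := by
    simp [Module.finrank_prod, Subspace.dual_finrank_eq]
  let e : (V × Q) ≃ₗ[ℝ] (Module.Dual ℝ V × Module.Dual ℝ Q) :=
    LinearEquiv.ofBijective L
      ⟨hinj, (LinearMap.injective_iff_surjective_of_finrank_eq_finrank hdim).mp hinj⟩
  intro F G
  -- translate the system into L (u,p) = (F, G)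
  have key : ∀ up : V × Q,
      ((∀ v : V, a up.1 v + b v up.2 = F v) ∧ (∀ q : Q, b up.1 q = G q)) ↔
        L up = (F, G) := by
    rintro ⟨u, p⟩
    rw [hLapp, Prod.mk.injEq]
    constructor
    · rintro ⟨h1, h2⟩
      exact ⟨LinearMap.ext h1, LinearMap.ext h2⟩
    · rintro ⟨h1, h2⟩
      refine ⟨fun v => ?_, fun q => ?_⟩
      · have := LinearMap.congr_fun h1 v; simpa using this
      · exact LinearMap.congr_fun h2 q
  refine ⟨e.symm (F, G), ?_, ?_⟩
  · exact (key _).mpr (e.apply_symm_apply (F, G))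
  · intro up h
    rw [key] at h
    have : e up = (F, G) := h
    rw [← this, e.symm_apply_apply]
end

section
/- Let H, S be finite-dimensional real inner product spaces and Δ : S → H a linear map (modeling the discrete codifferential δ restricted to the discrete space). Let D ⊆ H be a subspace (modeling d of the discrete potential space) and suppose every p ∈ H decomposes as p = q + Δr with q ∈ H, r ∈ S such that ‖q‖ ≤ C₁ N(p) and ‖q‖ + ‖Δr‖ ≤ C₂ ‖p‖, where N(p) := sup_{φ≠0, φ∈Φ} ⟨p, Dφ⟩/‖φ‖_Φ for a normed space Φ mapping into H via D. Then the norm equivalence ‖p‖ ≂ N(p) + sup_{s≠0} ⟨p, Δs⟩/(‖s‖² + ‖Δs‖²)^{1/2} holds for all p ∈ H, with constants depending only on C₁, C₂, and the norms of the maps involved. -/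
open RealInnerProductSpace

private lemma stmt15_sSup_nonneg {T : Type*} [AddGroup T] (F : T → ℝ)
    (hsymm : ∀ t, F (-t) = - F t)
    (hbdd : BddAbove {r | ∃ t : T, t ≠ 0 ∧ r = F t}) :
    0 ≤ sSup {r | ∃ t : T, t ≠ 0 ∧ r = F t} := by
  by_cases h : ∃ t : T, t ≠ 0
  · obtain ⟨t, ht⟩ := h
    have h1 := le_csSup hbdd ⟨t, ht, rfl⟩
    have h2 := le_csSup hbdd ⟨-t, neg_ne_zero.2 ht, rfl⟩
    rw [hsymm] at h2
    linarith
  · have he : {r | ∃ t : T, t ≠ 0 ∧ r = F t} = ∅ := by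
      ext r
      simp only [Set.mem_setOf_eq, Set.mem_empty_iff_false, iff_false]
      rintro ⟨t, ht, -⟩
      exact h ⟨t, ht⟩
    rw [he, Real.sSup_empty]

set_option maxHeartbeats 1000000 in
set_option synthInstance.maxHeartbeats 400000 in
/-- Discrete `L²` norm equivalence: a stable decomposition `p = q + Δr` with
`‖q‖ ≤ C₁ N(p)` and `‖q‖ + ‖Δr‖ ≤ C₂ ‖p‖` implies the two-sided norm equivalence
`‖p‖ ≂ N(p) + sup_s ⟨p, Δs⟩ / (‖s‖² + ‖Δs‖²)^{1/2}`. -/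
theorem stmt15 {H S Φ : Type*}
    [NormedAddCommGroup H] [InnerProductSpace ℝ H] [FiniteDimensional ℝ H]
    [NormedAddCommGroup S] [InnerProductSpace ℝ S] [FiniteDimensional ℝ S]
    [NormedAddCommGroup Φ] [NormedSpace ℝ Φ]
    (Δ : S →L[ℝ] H) (D : Φ →L[ℝ] H)
    (C₁ C₂ : ℝ) (hC₁ : 0 < C₁) (hC₂ : 0 < C₂)
    (N : H → ℝ)
    (hN : ∀ p, N p = sSup {r : ℝ | ∃ φ : Φ, φ ≠ 0 ∧ r = ⟪p, D φ⟫ / ‖φ‖})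
    (hdecomp : ∀ p : H, ∃ (q : H) (r : S), p = q + Δ r ∧ ‖q‖ ≤ C₁ * N p ∧
      ‖q‖ + ‖Δ r‖ ≤ C₂ * ‖p‖) :
    ∃ c C : ℝ, 0 < c ∧ 0 < C ∧ ∀ p : H,
      c * (N p + sSup {r : ℝ | ∃ s : S, s ≠ 0 ∧
            r = ⟪p, Δ s⟫ / Real.sqrt (‖s‖ ^ 2 + ‖Δ s‖ ^ 2)}) ≤ ‖p‖ ∧
      ‖p‖ ≤ C * (N p + sSup {r : ℝ | ∃ s : S, s ≠ 0 ∧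
            r = ⟪p, Δ s⟫ / Real.sqrt (‖s‖ ^ 2 + ‖Δ s‖ ^ 2)}) := by
  classical
  -- a bounded linear right inverse of Δ on its range
  obtain ⟨g, hg⟩ := LinearMap.exists_rightInverse_of_surjective
    ((Δ : S →ₗ[ℝ] H).rangeRestrict) (LinearMap.range_rangeRestrict _)
  have hgΔ : ∀ h : LinearMap.range (Δ : S →ₗ[ℝ] H), Δ (g h) = (h : H) := by
    intro h
    have := congrArg (fun f => f h) hg
    simpa using congrArg (Subtype.val) this
  set G := LinearMap.toContinuousLinearMap g with hG
  set cΔ : ℝ := ‖G‖ with hcΔ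
  have hcΔ0 : 0 ≤ cΔ := hcΔ ▸ norm_nonneg G
  -- notation for the sup sets
  set Mset : H → Set ℝ := fun p => {r : ℝ | ∃ s : S, s ≠ 0 ∧
      r = ⟪p, Δ s⟫ / Real.sqrt (‖s‖ ^ 2 + ‖Δ s‖ ^ 2)} with hMset
  -- sqrt positivity
  have hsqrtpos : ∀ s : S, s ≠ 0 → 0 < Real.sqrt (‖s‖ ^ 2 + ‖Δ s‖ ^ 2) := by
    intro s hs
    apply Real.sqrt_pos.2
    have h1 : 0 < ‖s‖ ^ 2 := pow_pos (norm_pos_iff.2 hs) 2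
    nlinarith [sq_nonneg ‖Δ s‖]
  have hle_sqrt : ∀ s : S, ‖Δ s‖ ≤ Real.sqrt (‖s‖ ^ 2 + ‖Δ s‖ ^ 2) := by
    intro s
    have h1 : ‖Δ s‖ ^ 2 ≤ ‖s‖ ^ 2 + ‖Δ s‖ ^ 2 := le_add_of_nonneg_left (sq_nonneg _)
    have h2 := Real.sqrt_le_sqrt h1
    rwa [Real.sqrt_sq (norm_nonneg _)] at h2
  -- boundedness of the M set
  have hMbdd : ∀ p : H, ‖p‖ ∈ upperBounds (Mset p) := by
    intro p r hr
    obtain ⟨s, hs, rfl⟩ := hr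
    rw [div_le_iff₀ (hsqrtpos s hs)]
    calc ⟪p, Δ s⟫ ≤ ‖p‖ * ‖Δ s‖ := real_inner_le_norm _ _
      _ ≤ ‖p‖ * Real.sqrt (‖s‖ ^ 2 + ‖Δ s‖ ^ 2) :=
        mul_le_mul_of_nonneg_left (hle_sqrt s) (norm_nonneg _)
  have hMbdd' : ∀ p : H, BddAbove (Mset p) := fun p => ⟨‖p‖, hMbdd p⟩
  -- nonnegativity of the sups
  have hMnn : ∀ p : H, 0 ≤ sSup (Mset p) := by
    intro p
    apply stmt15_sSup_nonneg (fun s => ⟪p, Δ s⟫ / Real.sqrt (‖s‖ ^ 2 + ‖Δ s‖ ^ 2))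
    · intro t
      simp [inner_neg_right, neg_div]
    · exact hMbdd' p
  have hNbdd : ∀ p : H, ∀ r ∈ {r : ℝ | ∃ φ : Φ, φ ≠ 0 ∧ r = ⟪p, D φ⟫ / ‖φ‖},
      r ≤ ‖D‖ * ‖p‖ := by
    intro p r hr
    obtain ⟨φ, hφ, rfl⟩ := hr
    rw [div_le_iff₀ (norm_pos_iff.2 hφ)]
    calc ⟪p, D φ⟫ ≤ ‖p‖ * ‖D φ‖ := real_inner_le_norm _ _
      _ ≤ ‖p‖ * (‖D‖ * ‖φ‖) :=
        mul_le_mul_of_nonneg_left (D.le_opNorm φ) (norm_nonneg _)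
      _ = ‖D‖ * ‖p‖ * ‖φ‖ := by ring
  have hNnn : ∀ p : H, 0 ≤ N p := by
    intro p
    rw [hN p]
    apply stmt15_sSup_nonneg (fun φ => ⟪p, D φ⟫ / ‖φ‖)
    · intro t
      simp [inner_neg_right, neg_div]
    · exact ⟨‖D‖ * ‖p‖, hNbdd p⟩
  have hNle : ∀ p : H, N p ≤ ‖D‖ * ‖p‖ := by
    intro p
    rw [hN p]
    exact Real.sSup_le (hNbdd p) (by positivity)
  have hMle : ∀ p : H, sSup (Mset p) ≤ ‖p‖ := by
    intro p
    exact Real.sSup_le (fun r hr => hMbdd p hr) (norm_nonneg _)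
  refine ⟨1 / (‖D‖ + 1), C₁ + (cΔ + 1) * C₂, by positivity, by positivity, fun p => ?_⟩
  constructor
  · rw [div_mul_eq_mul_div, one_mul, div_le_iff₀ (by positivity : (0:ℝ) < ‖D‖ + 1)]
    have h1 := hNle p
    have h2 := hMle p
    have h3 := norm_nonneg p
    nlinarith
  · -- upper bound
    obtain ⟨q, r, hp, hq, hqr⟩ := hdecomp p
    have hΔr : ‖Δ r‖ ≤ C₂ * ‖p‖ := by
      have := norm_nonneg q; linarith
    -- key estimate for the Δ r term
    have hkey : ⟪p, Δ r⟫ ≤ sSup (Mset p) * ((cΔ + 1) * C₂ * ‖p‖) := by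
      by_cases hΔr0 : Δ r = 0
      · rw [hΔr0, inner_zero_right]
        have := hMnn p
        positivity
      · set h₀ : LinearMap.range (Δ : S →ₗ[ℝ] H) := ⟨Δ r, ⟨r, rfl⟩⟩ with hh₀
        set r' : S := g h₀ with hr'
        have hΔr' : Δ r' = Δ r := hgΔ h₀
        have hr'0 : r' ≠ 0 := by
          intro h0
          apply hΔr0
          rw [← hΔr', h0, map_zero]
        have hnr' : ‖r'‖ ≤ cΔ * ‖Δ r‖ := by
          have := G.le_opNorm h₀
          simpa [hr', hG, hh₀] using this
        have hmem : ⟪p, Δ r⟫ / Real.sqrt (‖r'‖ ^ 2 + ‖Δ r‖ ^ 2) ∈ Mset p := by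
          exact ⟨r', hr'0, by rw [hΔr']⟩
        have hle := le_csSup (hMbdd' p) hmem
        have hsp : 0 < Real.sqrt (‖r'‖ ^ 2 + ‖Δ r‖ ^ 2) := by
          have := hsqrtpos r' hr'0
          rwa [hΔr'] at this
        have hsb : Real.sqrt (‖r'‖ ^ 2 + ‖Δ r‖ ^ 2) ≤ (cΔ + 1) * C₂ * ‖p‖ := by
          have h1 : Real.sqrt (‖r'‖ ^ 2 + ‖Δ r‖ ^ 2) ≤ ‖r'‖ + ‖Δ r‖ := by
            rw [show ‖r'‖ + ‖Δ r‖ = Real.sqrt ((‖r'‖ + ‖Δ r‖) ^ 2) by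
              rw [Real.sqrt_sq (by positivity)]]
            exact Real.sqrt_le_sqrt (by nlinarith [norm_nonneg r', norm_nonneg (Δ r)])
          have h2 : ‖r'‖ + ‖Δ r‖ ≤ (cΔ + 1) * ‖Δ r‖ := by nlinarith
          have h3 : (cΔ + 1) * ‖Δ r‖ ≤ (cΔ + 1) * (C₂ * ‖p‖) :=
            mul_le_mul_of_nonneg_left hΔr (by linarith)
          calc Real.sqrt (‖r'‖ ^ 2 + ‖Δ r‖ ^ 2) ≤ ‖r'‖ + ‖Δ r‖ := h1
            _ ≤ (cΔ + 1) * ‖Δ r‖ := h2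
            _ ≤ (cΔ + 1) * (C₂ * ‖p‖) := h3
            _ = (cΔ + 1) * C₂ * ‖p‖ := by ring
        calc ⟪p, Δ r⟫
            = (⟪p, Δ r⟫ / Real.sqrt (‖r'‖ ^ 2 + ‖Δ r‖ ^ 2)) *
              Real.sqrt (‖r'‖ ^ 2 + ‖Δ r‖ ^ 2) := by
              field_simp
          _ ≤ sSup (Mset p) * Real.sqrt (‖r'‖ ^ 2 + ‖Δ r‖ ^ 2) :=
              mul_le_mul_of_nonneg_right hle (le_of_lt hsp)
          _ ≤ sSup (Mset p) * ((cΔ + 1) * C₂ * ‖p‖) :=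
              mul_le_mul_of_nonneg_left hsb (hMnn p)
    have hsq : ‖p‖ ^ 2 ≤ (C₁ * N p + (cΔ + 1) * C₂ * sSup (Mset p)) * ‖p‖ := by
      have : (‖p‖ : ℝ) ^ 2 = ⟪p, q⟫ + ⟪p, Δ r⟫ := by
        rw [← real_inner_self_eq_norm_sq, ← inner_add_right, ← hp]
      rw [this]
      have hpq : ⟪p, q⟫ ≤ C₁ * N p * ‖p‖ := by
        calc ⟪p, q⟫ ≤ ‖p‖ * ‖q‖ := real_inner_le_norm _ _
          _ ≤ ‖p‖ * (C₁ * N p) := mul_le_mul_of_nonneg_left hq (norm_nonneg _)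
          _ = C₁ * N p * ‖p‖ := by ring
      nlinarith [hkey]
    rcases eq_or_ne p 0 with rfl | hp0
    · simp only [norm_zero]
      have := hNnn (0 : H)
      have := hMnn (0 : H)
      positivity
    · have hnp : (0:ℝ) < ‖p‖ := norm_pos_iff.2 hp0
      have h4 : ‖p‖ ≤ C₁ * N p + (cΔ + 1) * C₂ * sSup (Mset p) := by
        have := hsq
        rw [sq] at this
        exact le_of_mul_le_mul_right this hnp
      have h5 := hNnn p
      have h6 := hMnn p
      have h7 : sSup {r : ℝ | ∃ s : S, s ≠ 0 ∧
          r = ⟪p, Δ s⟫ / Real.sqrt (‖s‖ ^ 2 + ‖Δ s‖ ^ 2)} = sSup (Mset p) := rfl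
      rw [h7]
      nlinarith [mul_nonneg (mul_nonneg (by linarith : (0:ℝ) ≤ cΔ + 1) hC₂.le) h5,
        mul_nonneg hC₁.le h6]
end

section
/- Let H be a real Hilbert space and U ⊆ H a dense subspace equipped with a stronger norm. Suppose B : H → ℝ is a bounded linear functional, and I : U → H_h is a linear map into a finite-dimensional subspace H_h ⊆ H such that ⟨φ − Iφ, w⟩ = 0 for all w in a fixed subspace W_h ⊆ H and all φ ∈ U, and ‖Iφ‖_U ≤ C‖φ‖_U. Then for every q ∈ W_h: sup_{φ∈U, φ≠0} ⟨φ, q⟩/‖φ‖_U ≤ C · sup_{ψ∈H_h, ψ≠0} ⟨ψ, q⟩/‖ψ‖_U. -/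
open RealInnerProductSpace

/-- Fortin operator argument: if `I : U → U` maps into the discrete space `H_h`
(via the continuous inclusion `ι : U → H`), satisfies the orthogonality
`⟨φ − Iφ, w⟩ = 0` for all `w ∈ W_h`, and is stable `‖Iφ‖_U ≤ C ‖φ‖_U`, then the
continuous dual norm of any `q ∈ W_h` is controlled by its discrete dual norm. -/
theorem stmt18 {H U : Type*}
    [NormedAddCommGroup H] [InnerProductSpace ℝ H]
    [NormedAddCommGroup U] [NormedSpace ℝ U]
    (ι : U →L[ℝ] H)
    (Hh Wh : Submodule ℝ H) [FiniteDimensional ℝ Hh]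
    (I : U →ₗ[ℝ] U) (hIh : ∀ φ : U, ι (I φ) ∈ Hh)
    (horth : ∀ φ : U, ∀ w ∈ Wh, ⟪ι φ - ι (I φ), w⟫ = 0)
    (C : ℝ) (hC : 0 < C) (hstab : ∀ φ : U, ‖I φ‖ ≤ C * ‖φ‖) :
    ∀ q ∈ Wh,
      sSup {r : ℝ | ∃ φ : U, φ ≠ 0 ∧ r = ⟪ι φ, q⟫ / ‖φ‖} ≤
      C * sSup {r : ℝ | ∃ ψ : U, ι ψ ∈ Hh ∧ ψ ≠ 0 ∧ r = ⟪ι ψ, q⟫ / ‖ψ‖} := by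
  intro q hq
  set T := {r : ℝ | ∃ ψ : U, ι ψ ∈ Hh ∧ ψ ≠ 0 ∧ r = ⟪ι ψ, q⟫ / ‖ψ‖} with hT
  have hTbdd : BddAbove T := by
    refine ⟨‖ι‖ * ‖q‖, ?_⟩
    rintro r ⟨ψ, _, hψ0, rfl⟩
    have hψpos : (0:ℝ) < ‖ψ‖ := norm_pos_iff.mpr hψ0
    rw [div_le_iff₀ hψpos]
    calc ⟪ι ψ, q⟫ ≤ ‖ι ψ‖ * ‖q‖ := real_inner_le_norm _ _
      _ ≤ (‖ι‖ * ‖ψ‖) * ‖q‖ := by gcongr; exact ι.le_opNorm ψ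
      _ = ‖ι‖ * ‖q‖ * ‖ψ‖ := by ring
  have hs0 : 0 ≤ sSup T := by
    rcases Set.eq_empty_or_nonempty T with h | ⟨t, ht⟩
    · simp [h, Real.sSup_empty]
    · obtain ⟨ψ, hψh, hψ0, rfl⟩ := ht
      have hneg : -(⟪ι ψ, q⟫ / ‖ψ‖) ∈ T := by
        refine ⟨-ψ, ?_, neg_ne_zero.mpr hψ0, ?_⟩
        · simpa using Hh.neg_mem hψh
        · simp [inner_neg_left, neg_div]
      have h1 := le_csSup hTbdd (show ⟪ι ψ, q⟫ / ‖ψ‖ ∈ T from ⟨ψ, hψh, hψ0, rfl⟩)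
      have h2 := le_csSup hTbdd hneg
      linarith
  refine Real.sSup_le ?_ (mul_nonneg hC.le hs0)
  rintro r ⟨φ, hφ0, rfl⟩
  have key : ⟪ι φ, q⟫ = ⟪ι (I φ), q⟫ := by
    have := horth φ q hq
    rw [inner_sub_left] at this; linarith
  have hφpos : (0:ℝ) < ‖φ‖ := norm_pos_iff.mpr hφ0
  by_cases hIφ : I φ = 0
  · rw [key, hIφ]
    simp only [map_zero, inner_zero_left, zero_div]
    exact mul_nonneg hC.le hs0
  · have hψpos : (0:ℝ) < ‖I φ‖ := norm_pos_iff.mpr hIφ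
    have hmem : ⟪ι (I φ), q⟫ / ‖I φ‖ ∈ T := ⟨I φ, hIh φ, hIφ, rfl⟩
    have ht : ⟪ι (I φ), q⟫ / ‖I φ‖ ≤ sSup T := le_csSup hTbdd hmem
    by_cases ha : 0 ≤ ⟪ι (I φ), q⟫
    · rw [key]
      calc ⟪ι (I φ), q⟫ / ‖φ‖ ≤ C * (⟪ι (I φ), q⟫ / ‖I φ‖) := by
            rw [← mul_div_assoc, div_le_div_iff₀ hφpos hψpos]
            have := hstab φ
            nlinarith
        _ ≤ C * sSup T := by gcongr
    · rw [key]
      have h1 : ⟪ι (I φ), q⟫ / ‖φ‖ ≤ 0 :=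
        div_nonpos_of_nonpos_of_nonneg (le_of_lt (not_le.mp ha)) hφpos.le
      have h2 : 0 ≤ C * sSup T := mul_nonneg hC.le hs0
      linarith
end
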